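/- If a ∈ (−∞, −π²/2), then v0(a) > 0, the real number v0(a) does not belong to Λ_a, and there exists a root λ0(a) ∈ Λ_a with Re(λ0(a)) = v0(a) and Im(λ0(a)) ≠ 0. -/

import Mathlib

open MeasureTheory Real

/-!
For `λ ≠ 0` the characteristic equation reads `λ² = a (1 - e^{-λ})`. When `a ≤ -2` it has no real
solution, by comparing `e^t - 1` with `t + t²/2`. Writing `λ = x + iy` with `y ∈ (π, 2π)`, the
imaginary part of the equation determines `x > 0` as a continuous function of `y`, and the real part
changes sign between `y = π` and `y = 2π` as soon as `a < -π²/2`; so there is a root with positive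
real part off the real axis. Roots with `Re λ ≥ 0` satisfy `|λ| ≤ |a|`, so those with real part at
least that of this root form a compact set, on which `Re` attains its maximum `v₀(a)`. The maximiser
cannot be real.
-/

/-- The characteristic function `h_a(λ) = λ − a ∫_{−1}^0 e^{λu} du`. -/
noncomputable def charFn (a : ℝ) (lam : ℂ) : ℂ :=
  lam - a * ∫ u in (-1:ℝ)..0, Complex.exp (lam * u)

/-- The set `Λ_a` of complex solutions of the characteristic equation. -/
def charRoots (a : ℝ) : Set ℂ := {lam | charFn a lam = 0}

/-- `v₀(a) = sup{Re λ : λ ∈ Λ_a}`. -/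
noncomputable def v0 (a : ℝ) : ℝ := sSup (Complex.re '' charRoots a)

lemma charFn_zero (a : ℝ) : charFn a 0 = -a := by
  simp [charFn]

lemma continuous_charFn (a : ℝ) : Continuous (charFn a) := by
  unfold charFn
  have : Continuous fun lam : ℂ => ∫ u in (-1:ℝ)..0, Complex.exp (lam * u) :=
    intervalIntegral.continuous_parametric_intervalIntegral_of_continuous' (by fun_prop) _ _
  fun_prop

lemma isClosed_charRoots (a : ℝ) : IsClosed (charRoots a) :=
  isClosed_eq (continuous_charFn a) continuous_const

lemma mem_charRoots_iff_sq_eq {a : ℝ} {lam : ℂ} (h : lam ≠ 0) :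
    lam ∈ charRoots a ↔ lam ^ 2 = a * (1 - Complex.exp (-lam)) := by
  have hint : (∫ u in (-1:ℝ)..0, Complex.exp (lam * u)) = (1 - Complex.exp (-lam)) / lam := by
    rw [integral_exp_mul_complex h]
    push_cast
    rw [mul_zero, mul_neg_one, Complex.exp_zero]
  change charFn a lam = 0 ↔ _
  rw [charFn, hint, sub_eq_zero]
  constructor <;> intro he
  · field_simp at he
    linear_combination he
  · field_simp
    linear_combination he

lemma mk_mem_charRoots_iff {a x y : ℝ} (h : (⟨x, y⟩ : ℂ) ≠ 0) :
    (⟨x, y⟩ : ℂ) ∈ charRoots a ↔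
      x ^ 2 - y ^ 2 = a * (1 - exp (-x) * cos y) ∧ 2 * x * y = a * exp (-x) * sin y := by
  rw [mem_charRoots_iff_sq_eq h, Complex.ext_iff]
  refine and_congr ?_ ?_ <;> simp [sq, Complex.exp_re, Complex.exp_im]
  all_goals constructor <;> intro h <;> linarith

lemma norm_le_abs_of_mem_charRoots {a : ℝ} {lam : ℂ} (h : lam ∈ charRoots a)
    (hre : 0 ≤ lam.re) : ‖lam‖ ≤ |a| := by
  have hexp : ∀ u ∈ Set.uIoc (-1:ℝ) 0, ‖Complex.exp (lam * u)‖ ≤ 1 := by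
    intro u hu
    rw [Set.uIoc_of_le (by norm_num)] at hu
    rw [Complex.norm_exp, Real.exp_le_one_iff, Complex.re_mul_ofReal]
    exact mul_nonpos_of_nonneg_of_nonpos hre hu.2
  have hint : ‖∫ u in (-1:ℝ)..0, Complex.exp (lam * u)‖ ≤ 1 := by
    simpa using intervalIntegral.norm_integral_le_of_norm_le_const hexp
  have hlam : lam = a * ∫ u in (-1:ℝ)..0, Complex.exp (lam * u) := sub_eq_zero.mp h
  calc ‖lam‖ = |a| * ‖∫ u in (-1:ℝ)..0, Complex.exp (lam * u)‖ := by
        rw [hlam, norm_mul, Complex.norm_real, Real.norm_eq_abs, ← hlam]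
    _ ≤ |a| := mul_le_of_le_one_right (abs_nonneg a) hint

lemma exists_isGreatest_re_charRoots {a : ℝ} {r : ℂ} (hr : r ∈ charRoots a)
    (hr_re : 0 ≤ r.re) :
    ∃ l ∈ charRoots a, IsGreatest (Complex.re '' charRoots a) l.re := by
  set K := charRoots a ∩ {z | r.re ≤ z.re}
  have hK : IsCompact K := by
    refine (isCompact_closedBall (0:ℂ) |a|).of_isClosed_subset
      ((isClosed_charRoots a).inter (isClosed_le continuous_const Complex.continuous_re)) ?_
    rintro z ⟨hz, hz_re⟩
    rw [mem_closedBall_zero_iff]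
    exact norm_le_abs_of_mem_charRoots hz (hr_re.trans hz_re)
  obtain ⟨l, ⟨hl, hl_re⟩, hmax⟩ :=
    hK.exists_isMaxOn ⟨r, hr, le_refl r.re⟩ Complex.continuous_re.continuousOn
  refine ⟨l, hl, ⟨l, hl, rfl⟩, ?_⟩
  rintro _ ⟨z, hz, rfl⟩
  rcases lt_or_ge z.re r.re with hzr | hzr
  · exact (hzr.trans_le hl_re).le
  · exact hmax ⟨hz, hzr⟩

lemma sq_ne_mul_one_sub_exp_neg {a x : ℝ} (ha : a ≤ -2) (hx : x ≠ 0) :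
    x ^ 2 ≠ a * (1 - exp (-x)) := by
  rcases hx.lt_or_gt with hx | hx
  · have hexp := Real.quadratic_le_exp_of_nonneg (neg_nonneg.mpr hx.le)
    nlinarith
  · have hexp : exp (-x) < 1 := Real.exp_lt_one_iff.mpr (neg_lt_zero.mpr hx)
    nlinarith

lemma ofReal_notMem_charRoots {a : ℝ} (ha : a ≤ -2) (x : ℝ) : (x : ℂ) ∉ charRoots a := by
  rcases eq_or_ne x 0 with rfl | hx
  · change charFn a _ ≠ 0
    rw [Complex.ofReal_zero, charFn_zero]
    exact_mod_cast (by linarith : -a ≠ 0)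
  · rw [Complex.ofReal_def, mk_mem_charRoots_iff (by simpa [Complex.ext_iff] using hx)]
    simpa using sq_ne_mul_one_sub_exp_neg ha hx

/-- `x eˣ` on `[0, ∞)`, extended by `x` on `(-∞, 0]` to an increasing bijection of `ℝ`, so that
its inverse is continuous. -/
noncomputable def mulExpPosPart (x : ℝ) : ℝ := x * exp (max x 0)

lemma mulExpPosPart_of_nonneg {x : ℝ} (hx : 0 ≤ x) : mulExpPosPart x = x * exp x := by
  rw [mulExpPosPart, max_eq_left hx]

lemma mulExpPosPart_of_nonpos {x : ℝ} (hx : x ≤ 0) : mulExpPosPart x = x := by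
  rw [mulExpPosPart, max_eq_right hx, exp_zero, mul_one]

lemma strictMono_mulExpPosPart : StrictMono mulExpPosPart := by
  refine StrictMonoOn.Iic_union_Ici (a := 0) (fun x hx y hy hxy => ?_) (fun x hx y hy hxy => ?_)
  · rwa [mulExpPosPart_of_nonpos hx, mulExpPosPart_of_nonpos hy]
  · rw [mulExpPosPart_of_nonneg hx, mulExpPosPart_of_nonneg hy]
    have := exp_lt_exp.mpr hxy
    nlinarith [exp_pos x, Set.mem_Ici.mp hx]

lemma surjective_mulExpPosPart : Function.Surjective mulExpPosPart := by
  have hge : ∀ x, x ≤ mulExpPosPart x := by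
    intro x
    rcases le_total x 0 with hx | hx
    · exact (mulExpPosPart_of_nonpos hx).ge
    · exact le_mul_of_one_le_right hx (one_le_exp (le_max_right x 0))
  have hcont : Continuous mulExpPosPart := by
    unfold mulExpPosPart
    fun_prop
  refine hcont.surjective (Filter.tendsto_atTop_mono hge Filter.tendsto_id) ?_
  refine Filter.tendsto_id.congr' ?_
  filter_upwards [Filter.eventually_le_atBot 0] with x hx
  exact (mulExpPosPart_of_nonpos hx).symm

noncomputable def mulExpPosPartIso : ℝ ≃o ℝ :=
  StrictMono.orderIsoOfSurjective mulExpPosPart strictMono_mulExpPosPart surjective_mulExpPosPart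

lemma mulExpPosPartIso_symm_zero : mulExpPosPartIso.symm 0 = 0 :=
  mulExpPosPartIso.symm_apply_eq.mpr (mulExpPosPart_of_nonpos le_rfl).symm

lemma mulExpPosPartIso_symm_pos {q : ℝ} (hq : 0 < q) : 0 < mulExpPosPartIso.symm q :=
  mulExpPosPartIso_symm_zero ▸ mulExpPosPartIso.symm.strictMono hq

lemma mulExpPosPartIso_symm_mul_exp {q : ℝ} (hq : 0 < q) :
    mulExpPosPartIso.symm q * exp (mulExpPosPartIso.symm q) = q := by
  rw [← mulExpPosPart_of_nonneg (mulExpPosPartIso_symm_pos hq).le]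
  exact mulExpPosPartIso.apply_symm_apply q

lemma exists_mem_charRoots_re_pos_im_pos {a : ℝ} (ha : a < -(π ^ 2) / 2) :
    ∃ lam ∈ charRoots a, 0 < lam.re ∧ 0 < lam.im := by
  -- `x = X y` solves the imaginary part `2xy = a e^{-x} sin y` of the equation
  set X : ℝ → ℝ := fun y => mulExpPosPartIso.symm (a * sin y / (2 * y))
  set g : ℝ → ℝ := fun y => X y ^ 2 - y ^ 2 - a * (1 - exp (-X y) * cos y)
  have hX_cont : ContinuousOn X (Set.Icc π (2 * π)) :=
    mulExpPosPartIso.symm.continuous.comp_continuousOn <|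
      (by fun_prop : Continuous fun y => a * sin y).continuousOn.div (by fun_prop)
        fun y hy => by linarith [hy.1, pi_pos]
  have hg_cont : ContinuousOn g (Set.Icc π (2 * π)) := by
    have := continuous_exp.comp_continuousOn hX_cont.neg
    unfold g
    fun_prop
  have hg_pi : 0 < g π := by
    simp only [g, X, sin_pi, mul_zero, zero_div, mulExpPosPartIso_symm_zero, cos_pi, neg_zero,
      exp_zero]
    nlinarith
  have hg_two_pi : g (2 * π) < 0 := by
    simp only [g, X, sin_two_pi, mul_zero, zero_div, mulExpPosPartIso_symm_zero, cos_two_pi,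
      neg_zero, exp_zero]
    nlinarith [pi_pos]
  obtain ⟨y, ⟨hy₁, hy₂⟩, hgy⟩ :=
    intermediate_value_Ioo' (by linarith [pi_pos]) hg_cont ⟨hg_two_pi, hg_pi⟩
  have hy : 0 < y := pi_pos.trans hy₁
  have hsin : sin y < 0 := by
    rw [← sin_sub_two_pi]
    exact sin_neg_of_neg_of_neg_pi_lt (by linarith) (by linarith)
  have hq : 0 < a * sin y / (2 * y) :=
    div_pos (mul_pos_of_neg_of_neg (by nlinarith) hsin) (by linarith)
  have hX : 0 < X y := mulExpPosPartIso_symm_pos hq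
  have hXexp : X y * exp (X y) = a * sin y / (2 * y) := mulExpPosPartIso_symm_mul_exp hq
  have hne : (⟨X y, y⟩ : ℂ) ≠ 0 := fun h => hy.ne' (congrArg Complex.im h)
  refine ⟨⟨X y, y⟩, (mk_mem_charRoots_iff hne).mpr ⟨?_, ?_⟩, hX, hy⟩
  · linarith [show g y = 0 from hgy]
  · rw [exp_neg]
    field_simp at hXexp ⊢
    linarith

/-- If `a < −π²/2` then `v₀(a) > 0`, the real number `v₀(a)` is not a root, and there
is a genuinely complex root `λ₀(a)` with real part `v₀(a)`. -/
theorem charRoots_below_critical (a : ℝ) (ha : a < -(π ^ 2) / 2) :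
    0 < v0 a ∧
    ((v0 a : ℂ) ∉ charRoots a) ∧
    ∃ lam0 ∈ charRoots a, lam0.re = v0 a ∧ lam0.im ≠ 0 := by
  have ha' : a ≤ -2 := by nlinarith [pi_gt_three]
  obtain ⟨r, hr, hr_re, -⟩ := exists_mem_charRoots_re_pos_im_pos ha
  obtain ⟨l, hl, hgreatest⟩ := exists_isGreatest_re_charRoots hr hr_re.le
  have hv0 : v0 a = l.re := hgreatest.csSup_eq
  have hl_re : 0 < l.re := hr_re.trans_le (hgreatest.2 ⟨r, hr, rfl⟩)
  refine ⟨hv0 ▸ hl_re, ofReal_notMem_charRoots ha' _, l, hl, hv0.symm, fun him => ?_⟩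
  have hl_real : (l.re : ℂ) = l := Complex.ext rfl him.symm
  exact ofReal_notMem_charRoots ha' l.re (hl_real ▸ hl)
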